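/- Nominal equality is preserved under substitution: if ∇' ⊢ t₁ ≈ t₂ and the substitution σ respects ∇' with respect to ∇ (meaning ∇ ⊢ a # σ(X) for every pair (a,X) ∈ ∇'), then ∇ ⊢ σ(t₁) ≈ σ(t₂). -/

import Mathlib

abbrev Atom := ℕ
abbrev Var := ℕ
abbrev Perm := List (Atom × Atom)

def swap (p : Atom × Atom) (a : Atom) : Atom :=
  if a = p.1 then p.2 else if a = p.2 then p.1 else a

def permAtom : Perm → Atom → Atom
  | [], a => a
  | p :: π, a => swap p (permAtom π a)

def ds (π π' : Perm) : Set Atom := {a | permAtom π a ≠ permAtom π' a}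

inductive Trm : Type
  | unit : Trm
  | pair : Trm → Trm → Trm
  | fn : ℕ → Trm → Trm
  | atom : Atom → Trm
  | abs : Atom → Trm → Trm
  | susp : Perm → Var → Trm

def permTrm (π : Perm) : Trm → Trm
  | .unit => .unit
  | .pair t₁ t₂ => .pair (permTrm π t₁) (permTrm π t₂)
  | .fn f t => .fn f (permTrm π t)
  | .atom a => .atom (permAtom π a)
  | .abs a t => .abs (permAtom π a) (permTrm π t)
  | .susp π' X => .susp (π ++ π') X

abbrev Env := Set (Atom × Var)

inductive fresh (Γ : Env) (a : Atom) : Trm → Prop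
  | unit : fresh Γ a .unit
  | pair {t₁ t₂} : fresh Γ a t₁ → fresh Γ a t₂ → fresh Γ a (.pair t₁ t₂)
  | fn {f t} : fresh Γ a t → fresh Γ a (.fn f t)
  | abs₁ {t} : fresh Γ a (.abs a t)
  | abs₂ {b t} : a ≠ b → fresh Γ a t → fresh Γ a (.abs b t)
  | atom {b} : a ≠ b → fresh Γ a (.atom b)
  | susp {π X} : (permAtom π.reverse a, X) ∈ Γ → fresh Γ a (.susp π X)

inductive equ (Γ : Env) : Trm → Trm → Prop
  | unit : equ Γ .unit .unit
  | pair {t₁ t₂ s₁ s₂} : equ Γ t₁ t₂ → equ Γ s₁ s₂ → equ Γ (.pair t₁ s₁) (.pair t₂ s₂)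
  | fn {f t₁ t₂} : equ Γ t₁ t₂ → equ Γ (.fn f t₁) (.fn f t₂)
  | abs₁ {a t₁ t₂} : equ Γ t₁ t₂ → equ Γ (.abs a t₁) (.abs a t₂)
  | abs₂ {a b t₁ t₂} : a ≠ b → fresh Γ a t₂ → equ Γ t₁ (permTrm [(a, b)] t₂) →
      equ Γ (.abs a t₁) (.abs b t₂)
  | atom {a} : equ Γ (.atom a) (.atom a)
  | susp {π π' X} : (∀ c ∈ ds π π', (c, X) ∈ Γ) → equ Γ (.susp π X) (.susp π' X)

inductive weak : Trm → Trm → Prop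
  | unit : weak .unit .unit
  | atom {a} : weak (.atom a) (.atom a)
  | fn {f t t'} : weak t t' → weak (.fn f t) (.fn f t')
  | pair {t₁ t₂ s₁ s₂} : weak t₁ s₁ → weak t₂ s₂ → weak (.pair t₁ t₂) (.pair s₁ s₂)
  | abs {a t t'} : weak t t' → weak (.abs a t) (.abs a t')
  | susp {π π' X} : ds π π' = ∅ → weak (.susp π X) (.susp π' X)

def subst (σ : Var → Option Trm) : Trm → Trm
  | .unit => .unit
  | .pair t₁ t₂ => .pair (subst σ t₁) (subst σ t₂)
  | .fn f t => .fn f (subst σ t)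
  | .atom a => .atom a
  | .abs a t => .abs a (subst σ t)
  | .susp π X =>
      match σ X with
      | some t => permTrm π t
      | none => .susp π X

/-!
Induct on the derivation of `t₁ ≈ t₂`. Substitution commutes with permutations
(`σ(π • t) = π • σ(t)`) and preserves freshness, which settles every rule except the suspension
rule. There `σ(π·X) = π • σ(X)`, and every atom of `ds π π'` is fresh for `σ(X)` because `σ`
respects `∇'`; so the case reduces to: if every atom of `ds π π'` is fresh for `t`, then
`π • t ≈ π' • t`. In the abstraction case of that lemma with `π a ≠ π' a`, one compares
`π • t` with `(π a π' a) • π' • t`, whose disagreement set avoids `a` and lies inside `ds π π'`.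
-/

lemma swap_swap (p : Atom × Atom) (a : Atom) : swap p (swap p a) = a := by
  rcases p with ⟨x, y⟩
  simp only [swap]
  split_ifs <;> simp_all

lemma swap_apply_right (x y : Atom) : swap (x, y) y = x := by
  simp only [swap]
  split_ifs <;> simp_all

lemma swap_apply_of_ne_of_ne {x y a : Atom} (hx : a ≠ x) (hy : a ≠ y) : swap (x, y) a = a := by
  simp [swap, hx, hy]

lemma permAtom_cons (p : Atom × Atom) (π : Perm) (a : Atom) :
    permAtom (p :: π) a = swap p (permAtom π a) := rfl

lemma permAtom_append (π π' : Perm) (a : Atom) :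
    permAtom (π ++ π') a = permAtom π (permAtom π' a) := by
  induction π with
  | nil => rfl
  | cons p π ih => simp [permAtom, ih]

lemma permAtom_reverse_permAtom (π : Perm) (a : Atom) :
    permAtom π.reverse (permAtom π a) = a := by
  induction π generalizing a with
  | nil => rfl
  | cons p π ih => simp [permAtom_append, permAtom, swap_swap, ih]

lemma permAtom_permAtom_reverse (π : Perm) (a : Atom) :
    permAtom π (permAtom π.reverse a) = a := by
  simpa using permAtom_reverse_permAtom π.reverse a

lemma permAtom_injective (π : Perm) : Function.Injective (permAtom π) :=
  Function.LeftInverse.injective (permAtom_reverse_permAtom π)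

lemma mem_ds {π π' : Perm} {c : Atom} : c ∈ ds π π' ↔ permAtom π c ≠ permAtom π' c := Iff.rfl

lemma permAtom_reverse_mem_ds {π π' : Perm} {a : Atom} (ha : permAtom π a ≠ permAtom π' a) :
    permAtom π'.reverse (permAtom π a) ∈ ds π π' \ {a} := by
  set c := permAtom π'.reverse (permAtom π a)
  have hc : permAtom π' c = permAtom π a := permAtom_permAtom_reverse π' _
  have hca : c ≠ a := fun h => ha (h ▸ hc).symm
  exact ⟨fun h => hca (permAtom_injective π (h.trans hc)), hca⟩

lemma ds_swap_cons_subset (π π' : Perm) (a : Atom) :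
    ds π ((permAtom π a, permAtom π' a) :: π') ⊆ ds π π' \ {a} := by
  intro c hc
  rw [mem_ds, permAtom_cons] at hc
  have hca : c ≠ a := by
    rintro rfl
    exact hc (swap_apply_right _ _).symm
  refine ⟨fun hc' => hc ?_, hca⟩
  rw [← hc', swap_apply_of_ne_of_ne]
  · exact fun h => hca (permAtom_injective π h)
  · exact fun h => hca (permAtom_injective π' (hc'.symm.trans h))

lemma permTrm_nil (t : Trm) : permTrm [] t = t := by
  induction t <;> simp_all [permTrm, permAtom]

lemma permTrm_append (π π' : Perm) (t : Trm) :
    permTrm (π ++ π') t = permTrm π (permTrm π' t) := by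
  induction t <;> simp_all [permTrm, permAtom_append]

lemma subst_permTrm (σ : Var → Option Trm) (π : Perm) (t : Trm) :
    subst σ (permTrm π t) = permTrm π (subst σ t) := by
  induction t with
  | susp π' X =>
    simp only [permTrm, subst]
    cases σ X <;> simp [permTrm, permTrm_append]
  | _ => simp_all [permTrm, subst]

lemma subst_susp (σ : Var → Option Trm) (π : Perm) (X : Var) :
    subst σ (.susp π X) = permTrm π (subst σ (.susp [] X)) := by
  simp only [subst]
  cases σ X <;> simp [permTrm, permTrm_nil]

section Freshness

variable {Γ Γ' : Env} {a c : Atom} {t : Trm}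

lemma fresh.of_abs (h : fresh Γ c (.abs a t)) (hca : c ≠ a) : fresh Γ c t := by
  cases h with
  | abs₁ => exact absurd rfl hca
  | abs₂ _ h => exact h

lemma fresh_permTrm (π : Perm) (h : fresh Γ a t) : fresh Γ (permAtom π a) (permTrm π t) := by
  induction h with
  | unit => exact .unit
  | pair _ _ ih₁ ih₂ => exact .pair ih₁ ih₂
  | fn _ ih => exact .fn ih
  | abs₁ => exact .abs₁
  | abs₂ hne _ ih => exact .abs₂ (fun h => hne (permAtom_injective π h)) ih
  | atom hne => exact .atom (fun h => hne (permAtom_injective π h))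
  | @susp π' X hmem =>
    refine .susp ?_
    rwa [List.reverse_append, permAtom_append, permAtom_reverse_permAtom]

lemma fresh_subst {σ : Var → Option Trm} (h : fresh Γ' a t)
    (hσ : ∀ a X, (a, X) ∈ Γ' → fresh Γ a (subst σ (Trm.susp [] X))) :
    fresh Γ a (subst σ t) := by
  induction h with
  | unit => exact .unit
  | pair _ _ ih₁ ih₂ => exact .pair ih₁ ih₂
  | fn _ ih => exact .fn ih
  | abs₁ => exact .abs₁
  | abs₂ hne _ ih => exact .abs₂ hne ih
  | atom hne => exact .atom hne
  | @susp π X hmem =>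
    rw [subst_susp]
    simpa [permAtom_permAtom_reverse] using fresh_permTrm π (hσ _ _ hmem)

end Freshness

lemma equ_permTrm_of_fresh {Γ : Env} (t : Trm) (π π' : Perm)
    (hf : ∀ c ∈ ds π π', fresh Γ c t) : equ Γ (permTrm π t) (permTrm π' t) := by
  induction t generalizing π π' with
  | unit => exact .unit
  | pair t₁ t₂ ih₁ ih₂ =>
    refine .pair (ih₁ π π' fun c hc => ?_) (ih₂ π π' fun c hc => ?_) <;>
      cases hf c hc <;> assumption
  | fn f t ih =>
    refine .fn (ih π π' fun c hc => ?_)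
    cases hf c hc
    assumption
  | atom a =>
    have ha : permAtom π a = permAtom π' a := by
      by_contra ha
      cases hf a ha with | atom hne => exact hne rfl
    rw [permTrm, permTrm, ha]
    exact .atom
  | susp ρ X =>
    refine .susp fun c hc => ?_
    rw [mem_ds, permAtom_append, permAtom_append] at hc
    cases hf _ hc with
    | susp hmem => rwa [permAtom_reverse_permAtom] at hmem
  | abs a t ih =>
    have ht : ∀ c ∈ ds π π' \ {a}, fresh Γ c t := fun c hc => (hf c hc.1).of_abs hc.2
    by_cases ha : permAtom π a = permAtom π' a
    · rw [permTrm, permTrm, ha]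
      exact .abs₁ (ih π π' fun c hc => ht c ⟨hc, by rintro rfl; exact hc ha⟩)
    · refine .abs₂ ha ?_ ?_
      · simpa [permAtom_permAtom_reverse] using
          fresh_permTrm π' (ht _ (permAtom_reverse_mem_ds ha))
      · rw [← permTrm_append]
        exact ih π _ fun c hc => ht c (ds_swap_cons_subset π π' a hc)

theorem equ_subst (Γ Γ' : Env) (σ : Var → Option Trm) (t₁ t₂ : Trm)
    (h : equ Γ' t₁ t₂)
    (hσ : ∀ a X, (a, X) ∈ Γ' → fresh Γ a (subst σ (Trm.susp [] X))) :
    equ Γ (subst σ t₁) (subst σ t₂) := by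
  induction h with
  | unit => exact .unit
  | pair _ _ ih₁ ih₂ => exact .pair ih₁ ih₂
  | fn _ ih => exact .fn ih
  | abs₁ _ ih => exact .abs₁ ih
  | abs₂ hne hf _ ih =>
    refine .abs₂ hne (fresh_subst hf hσ) ?_
    rwa [← subst_permTrm]
  | atom => exact .atom
  | @susp π π' X hds =>
    rw [subst_susp, subst_susp σ π']
    exact equ_permTrm_of_fresh _ π π' fun c hc => hσ c X (hds c hc)
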